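/- arXiv:2005.06094 — 10 statements merged into one kernel-verified Lean document; each statement's English description precedes it below -/
import Mathlib

section
/- If a pinwheel instance has exactly three symbols α_1, α_2, α_3 and density ρ = 1/α_1 + 1/α_2 + 1/α_3 ≤ 5/6, then it admits a feasible schedule. -/
/-- A pinwheel schedule `c` is feasible for the instance `α` if every symbol `i`
occurs in every window of `α i` consecutive time slots. -/
def PinFeasible {q : ℕ} (α : Fin q → ℕ) (c : ℕ → Fin q) : Prop :=
  ∀ i : Fin q, ∀ t : ℕ, ∃ t', t ≤ t' ∧ t' < t + α i ∧ c t' = i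

lemma sched3 (α : Fin 3 → ℕ) (h : ∀ i, 3 ≤ α i) : ∃ c : ℕ → Fin 3, PinFeasible α c := by
  refine ⟨fun t => ⟨t % 3, Nat.mod_lt _ (by norm_num)⟩, ?_⟩
  intro i t
  have hi := i.isLt
  have hai := h i
  refine ⟨t + (i.val + 3 - t % 3) % 3, by omega, by omega, ?_⟩
  apply Fin.ext
  show (t + (i.val + 3 - t % 3) % 3) % 3 = i.val
  omega

lemma sched4 (α : Fin 3 → ℕ) (j k l : Fin 3) (hjk : j ≠ k) (hjl : j ≠ l) (hkl : k ≠ l)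
    (hj : 2 ≤ α j) (hk : 4 ≤ α k) (hl : 4 ≤ α l) : ∃ c : ℕ → Fin 3, PinFeasible α c := by
  refine ⟨fun t => if t % 4 = 1 then k else if t % 4 = 3 then l else j, ?_⟩
  intro i t
  have hij : i = j ∨ i = k ∨ i = l := by
    have h1 := i.isLt; have h2 := j.isLt; have h3 := k.isLt; have h4 := l.isLt
    have e1 : j.val ≠ k.val := fun h => hjk (Fin.ext h)
    have e2 : j.val ≠ l.val := fun h => hjl (Fin.ext h)
    have e3 : k.val ≠ l.val := fun h => hkl (Fin.ext h)
    simp only [Fin.ext_iff]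
    omega
  rcases hij with rfl | rfl | rfl
  · refine ⟨t + t % 2, by omega, by omega, ?_⟩
    show (if (t + t % 2) % 4 = 1 then k else if (t + t % 2) % 4 = 3 then l else i) = i
    split_ifs with h1 h2
    · omega
    · omega
    · rfl
  · refine ⟨t + (1 + 4 - t % 4) % 4, by omega, by omega, ?_⟩
    show (if (t + (1 + 4 - t % 4) % 4) % 4 = 1 then i else _) = i
    have : (t + (1 + 4 - t % 4) % 4) % 4 = 1 := by omega
    rw [if_pos this]
  · refine ⟨t + (3 + 4 - t % 4) % 4, by omega, by omega, ?_⟩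
    have h3 : (t + (3 + 4 - t % 4) % 4) % 4 = 3 := by omega
    show (if (t + (3 + 4 - t % 4) % 4) % 4 = 1 then k else if (t + (3 + 4 - t % 4) % 4) % 4 = 3 then i else j) = i
    rw [if_neg (by omega), if_pos h3]

lemma nat_ge_two {n : ℕ} (h1 : 1 ≤ n) (h : (1 : ℝ) / n < 5 / 6) : 2 ≤ n := by
  by_contra hc
  have : n = 1 := by omega
  subst this
  norm_num at h

lemma nat_ge_four {n : ℕ} (h1 : 1 ≤ n) (h : (1 : ℝ) / n < 1 / 3) : 4 ≤ n := by
  by_contra hc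
  have hn3 : (n : ℝ) ≤ 3 := by exact_mod_cast (by omega : n ≤ 3)
  have hn0 : (0 : ℝ) < n := by exact_mod_cast h1
  have := one_div_le_one_div_of_le hn0 hn3
  linarith

/-- A pinwheel instance with exactly three symbols and density `ρ ≤ 5/6`
admits a feasible schedule. -/
theorem stmt_3 (α : Fin 3 → ℕ) (hα : ∀ i, 1 ≤ α i)
    (hρ : ∑ i : Fin 3, (1 : ℝ) / (α i : ℝ) ≤ 5 / 6) :
    ∃ c : ℕ → Fin 3, PinFeasible α c := by
  rw [Fin.sum_univ_three] at hρ
  have hpos : ∀ i : Fin 3, (0 : ℝ) < 1 / (α i : ℝ) := fun i =>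
    one_div_pos.mpr (by exact_mod_cast hα i)
  have p0 := hpos 0; have p1 := hpos 1; have p2 := hpos 2
  have h01 : (1:ℝ)/(α 0) + 1/(α 1) < 5/6 := by linarith
  have h02 : (1:ℝ)/(α 0) + 1/(α 2) < 5/6 := by linarith
  have h12 : (1:ℝ)/(α 1) + 1/(α 2) < 5/6 := by linarith
  have ha2 : 2 ≤ α 0 := nat_ge_two (hα 0) (by linarith)
  have hb2 : 2 ≤ α 1 := nat_ge_two (hα 1) (by linarith)
  have hc2 : 2 ≤ α 2 := nat_ge_two (hα 2) (by linarith)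
  by_cases hall : ∀ i, 3 ≤ α i
  · exact sched3 α hall
  · push_neg at hall
    obtain ⟨i, hi⟩ := hall
    fin_cases i
    · have hi' : α 0 < 3 := hi
      have he : (α 0 : ℝ) = 2 := by
        have : α 0 = 2 := by omega
        rw [this]; norm_num
      rw [he] at h01 h02
      exact sched4 α 0 1 2 (by decide) (by decide) (by decide) ha2
        (nat_ge_four (hα 1) (by linarith)) (nat_ge_four (hα 2) (by linarith))
    · have hi' : α 1 < 3 := hi
      have he : (α 1 : ℝ) = 2 := by
        have : α 1 = 2 := by omega
        rw [this]; norm_num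
      rw [he] at h01 h12
      exact sched4 α 1 0 2 (by decide) (by decide) (by decide) hb2
        (nat_ge_four (hα 0) (by linarith)) (nat_ge_four (hα 2) (by linarith))
    · have hi' : α 2 < 3 := hi
      have he : (α 2 : ℝ) = 2 := by
        have : α 2 = 2 := by omega
        rw [this]; norm_num
      rw [he] at h02 h12
      exact sched4 α 2 0 1 (by decide) (by decide) (by decide) hc2
        (nat_ge_four (hα 0) (by linarith)) (nat_ge_four (hα 1) (by linarith))
end

section
/- If a pinwheel instance has exactly two symbols α_1, α_2 and density ρ = 1/α_1 + 1/α_2 ≤ 1, then it admits a feasible schedule. -/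
/-- A pinwheel instance with exactly two symbols and density `ρ ≤ 1`
admits a feasible schedule. -/
theorem stmt_4 (α : Fin 2 → ℕ) (hα : ∀ i, 1 ≤ α i)
    (hρ : ∑ i : Fin 2, (1 : ℝ) / (α i : ℝ) ≤ 1) :
    ∃ c : ℕ → Fin 2, PinFeasible α c := by
  have h2 : ∀ i : Fin 2, 2 ≤ α i := by
    intro i
    by_contra h
    have hi1 : α i = 1 := by have := hα i; omega
    have hsum : (1 : ℝ) / (α 0 : ℝ) + 1 / (α 1 : ℝ) ≤ 1 := by
      simpa [Fin.sum_univ_two] using hρ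
    have hj := hα (1 - i)
    have hpos : (0 : ℝ) < 1 / (α (1 - i) : ℝ) := by
      apply div_pos one_pos
      exact_mod_cast Nat.lt_of_lt_of_le Nat.zero_lt_one hj
    fin_cases i <;> simp_all <;> linarith
  refine ⟨fun t => ⟨t % 2, Nat.mod_lt _ (by norm_num)⟩, ?_⟩
  intro i t
  by_cases h : t % 2 = i.val
  · exact ⟨t, le_refl t, by have := h2 i; omega, by ext; simpa using h⟩
  · refine ⟨t + 1, by omega, by have := h2 i; omega, ?_⟩
    ext
    have := i.isLt
    simp only
    omega
end

section
/- Every pinwheel instance that admits a feasible schedule admits a feasible cyclic schedule, i.e., a feasible schedule c for which there exists a period T ≥ 1 with c(t + T) = c(t) for all t. -/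
/-- Key construction: if two windows of length `M` (at positions `M*n1`, `M*n2`,
`n1 < n2`) of a feasible schedule coincide, then the schedule obtained by
repeating the segment between them with period `M*(n2-n1)` is feasible. -/
theorem pinwheel_cyclic_of_window_eq {q : ℕ} (α : Fin q → ℕ) (c : ℕ → Fin q)
    (hc : PinFeasible α c) (M : ℕ) (hM : 1 ≤ M) (hαM : ∀ i, α i ≤ M)
    (n1 n2 : ℕ) (hlt : n1 < n2)
    (hw : ∀ j, j < M → c (M * n1 + j) = c (M * n2 + j)) :
    ∃ c' : ℕ → Fin q, PinFeasible α c' ∧ ∃ T : ℕ, 1 ≤ T ∧ ∀ t, c' (t + T) = c' t := by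
  set t1 := M * n1 with ht1
  set T := M * (n2 - n1) with hT
  have hT1 : M ≤ T := by
    have : 1 ≤ n2 - n1 := by omega
    calc M = M * 1 := by ring
    _ ≤ M * (n2 - n1) := Nat.mul_le_mul_left M this
  have ht2 : t1 + T = M * n2 := by
    rw [ht1, hT, ← Nat.mul_add]
    congr 1
    omega
  refine ⟨fun t => c (t1 + t % T), ?_, T, by omega, fun t => by
    simp [Nat.add_mod_right]⟩
  -- the key claim
  have key : ∀ t j, j < M → c (t1 + (t + j) % T) = c (t1 + t % T + j) := by
    intro t j hj
    set r := t % T with hr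
    have hrT : r < T := Nat.mod_lt _ (by omega)
    have hmod : (t + j) % T = (r + j) % T := by
      conv_rhs => rw [hr, Nat.add_mod, Nat.mod_mod_of_dvd, ← Nat.add_mod] <;> rfl
    by_cases hcase : r + j < T
    · rw [hmod, Nat.mod_eq_of_lt hcase]
      ring_nf
    · have h2 : (r + j) % T = r + j - T := by
        rw [Nat.mod_eq_sub_mod (by omega), Nat.mod_eq_of_lt (by omega)]
      have hk : r + j - T < M := by omega
      have := hw (r + j - T) hk
      rw [hmod, h2, show t1 + (r + j - T) = M * n1 + (r + j - T) from rfl,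
        show t1 + r + j = M * n2 + (r + j - T) from by omega] at *
      exact this
  intro i t
  obtain ⟨t', h1, h2, h3⟩ := hc i (t1 + t % T)
  set j := t' - (t1 + t % T) with hj
  have hjM : j < M := by have := hαM i; omega
  refine ⟨t + j, by omega, by have := hαM i; omega, ?_⟩
  have := key t j hjM
  show c (t1 + (t + j) % T) = i
  rw [this, show t1 + t % T + j = t' from by omega]
  exact h3

/-- Every pinwheel instance that admits a feasible schedule admits a feasible
cyclic (periodic) schedule. -/
theorem stmt_5 {q : ℕ} (α : Fin q → ℕ) (hα : ∀ i, 1 ≤ α i)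
    (h : ∃ c : ℕ → Fin q, PinFeasible α c) :
    ∃ c : ℕ → Fin q, PinFeasible α c ∧ ∃ T : ℕ, 1 ≤ T ∧ ∀ t, c (t + T) = c t := by
  obtain ⟨c, hc⟩ := h
  set M := (Finset.univ.sup α) + 1 with hM
  have hαM : ∀ i, α i ≤ M := fun i =>
    (Finset.le_sup (Finset.mem_univ i)).trans (Nat.le_succ _)
  obtain ⟨a, b, hab, heq⟩ :=
    Finite.exists_ne_map_eq_of_infinite (fun n : ℕ => fun j : Fin M => c (M * n + j))
  have hw : ∀ n1 n2, (fun j : Fin M => c (M * n1 + j)) = (fun j : Fin M => c (M * n2 + j)) →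
      ∀ j, j < M → c (M * n1 + j) = c (M * n2 + j) := by
    intro n1 n2 he j hj
    exact congrFun he ⟨j, hj⟩
  rcases hab.lt_or_gt with hlt | hlt
  · exact pinwheel_cyclic_of_window_eq α c hc M (by omega) hαM a b hlt (hw a b heq)
  · exact pinwheel_cyclic_of_window_eq α c hc M (by omega) hαM b a hlt (hw b a heq.symm)
end

section
/- If a connection-pattern instance (𝓒, {α_1,…,α_q}) admits a feasible schedule, then it admits a feasible cyclic schedule whose period is no greater than m = ∏_{i=1}^q α_i, i.e., a feasible schedule C with C(t + T) = C(t) for all t, for some T ≤ ∏_{i=1}^q α_i. -/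
/-- A connection-pattern schedule `C` (times `t ≥ 1`) is feasible for the safe time
intervals `α` if every agent `i` is connected in every window of `α i` consecutive steps. -/
def ConnFeasible {q : ℕ} (α : Fin q → ℕ) (C : ℕ → Finset (Fin q)) : Prop :=
  ∀ i : Fin q, ∀ t : ℕ, 1 ≤ t → ∃ t', t ≤ t' ∧ t' < t + α i ∧ i ∈ C t'

/-- The last time `t' ≤ t`, `t' ≥ 1`, at which agent `i` is connected (0 if none). -/
def lastOcc {q : ℕ} (C : ℕ → Finset (Fin q)) (i : Fin q) (t : ℕ) : ℕ :=
  Nat.findGreatest (fun t' => 1 ≤ t' ∧ i ∈ C t') t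


lemma lastOcc_le {q : ℕ} (C : ℕ → Finset (Fin q)) (i : Fin q) (t : ℕ) :
    lastOcc C i t ≤ t := Nat.findGreatest_le t

lemma le_lastOcc {q : ℕ} {C : ℕ → Finset (Fin q)} {i : Fin q} {k t : ℕ}
    (h1 : k ≤ t) (h2 : 1 ≤ k) (h3 : i ∈ C k) : k ≤ lastOcc C i t :=
  Nat.le_findGreatest (P := fun t' => 1 ≤ t' ∧ i ∈ C t') h1 ⟨h2, h3⟩

lemma lastOcc_mem {q : ℕ} {C : ℕ → Finset (Fin q)} {i : Fin q} {k t : ℕ}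
    (h1 : k ≤ t) (h2 : 1 ≤ k) (h3 : i ∈ C k) :
    1 ≤ lastOcc C i t ∧ i ∈ C (lastOcc C i t) :=
  Nat.findGreatest_spec (P := fun t' => 1 ≤ t' ∧ i ∈ C t') h1 ⟨h2, h3⟩

lemma lastOcc_greatest {q : ℕ} {C : ℕ → Finset (Fin q)} {i : Fin q} {k t : ℕ}
    (h1 : lastOcc C i t < k) (h2 : k ≤ t) : i ∉ C k :=
  fun hm => Nat.findGreatest_is_greatest (P := fun t' => 1 ≤ t' ∧ i ∈ C t') h1 h2 ⟨by omega, hm⟩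

/-- Splicing lemma: if a feasible schedule has equal "time since last occurrence"
state vectors at two times `a < b` (both past the transient), then the periodic
schedule obtained by repeating the segment `(a, b]` is feasible with period `b - a`. -/
theorem stmt_7_aux {q : ℕ} (α : Fin q → ℕ) (hα : ∀ i, 1 ≤ α i)
    (C : ℕ → Finset (Fin q)) (hfeas : ConnFeasible α C)
    (a b : ℕ) (hab : a < b) (ha : ∀ i, α i ≤ a)
    (heq : ∀ i, a - lastOcc C i a = b - lastOcc C i b) :
    ConnFeasible α (fun t => C (a + 1 + ((t - 1) % (b - a)))) := by
  classical
  set T := b - a with hT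
  have hT1 : 1 ≤ T := by omega
  have hLspec : ∀ i t, α i ≤ t →
      1 ≤ lastOcc C i t ∧ lastOcc C i t ≤ t ∧ i ∈ C (lastOcc C i t) ∧
        t < lastOcc C i t + α i := by
    intro i t ht
    obtain ⟨t', ht1, ht2, ht3⟩ := hfeas i (t - α i + 1) (by omega)
    have hle : t' ≤ lastOcc C i t := le_lastOcc (k := t') (by omega) (by omega) ht3
    have hP := lastOcc_mem (C := C) (k := t') (t := t) (by omega) (by omega) ht3
    exact ⟨hP.1, lastOcc_le C i t, hP.2, by omega⟩
  have hLgr : ∀ i t k, lastOcc C i t < k → k ≤ t → i ∉ C k :=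
    fun i t k h1 h2 => lastOcc_greatest h1 h2
  -- key cyclic covering lemma
  have hkey : ∀ i : Fin q, ∀ p, p < T →
      ∃ d, d < α i ∧ i ∈ C (a + 1 + ((p + d) % T)) := by
    intro i p hp
    set x := a + 1 + p with hx
    have hxa : a + 1 ≤ x := by omega
    have hxb : x ≤ b := by omega
    have hLa := hLspec i a (ha i)
    have hLb := hLspec i b (le_trans (ha i) (by omega))
    rcases le_or_gt (α i) T with hle | hgt
    · -- case α i ≤ T
      by_cases hA : ∃ t', x ≤ t' ∧ t' ≤ b ∧ t' < x + α i ∧ i ∈ C t'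
      · obtain ⟨t', h1, h2, h3, h4⟩ := hA
        refine ⟨t' - x, by omega, ?_⟩
        have hmod : (p + (t' - x)) % T = p + (t' - x) := Nat.mod_eq_of_lt (by omega)
        rw [hmod]
        have : a + 1 + (p + (t' - x)) = t' := by omega
        rwa [this]
      · push_neg at hA
        obtain ⟨t₁, ht11, ht12, ht13⟩ := hfeas i x (by omega)
        have ht1b : b < t₁ := by
          by_contra hcon
          exact hA t₁ ht11 (by omega) ht12 ht13
        have hbx : b < x + α i := by omega
        -- no occurrence of i in [x, b]
        have hnone : ∀ y, x ≤ y → y ≤ b → i ∉ C y := by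
          intro y hy1 hy2
          exact hA y hy1 hy2 (by omega)
        have hLbx : lastOcc C i b < x := by
          by_contra hcon
          exact hnone (lastOcc C i b) (by omega) hLb.2.1 hLb.2.2.1
        have hsb : b - x + 1 ≤ b - lastOcc C i b := by omega
        have heqi := heq i
        -- occurrence after a from window starting at lastOcc C i a + 1
        obtain ⟨t₂, h21, h22, h23⟩ := hfeas i (lastOcc C i a + 1) (by omega)
        have ht2a : a < t₂ := by
          by_contra hcon
          exact hLgr i a t₂ (by omega) (by omega) h23
        have ht2ub : t₂ ≤ x + α i - T - 1 := by omega
        have ht2b : t₂ ≤ b := by omega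
        refine ⟨t₂ + T - x, by omega, ?_⟩
        have hsum : p + (t₂ + T - x) = (t₂ - a - 1) + T := by omega
        rw [hsum, Nat.add_mod_right, Nat.mod_eq_of_lt (by omega)]
        have : a + 1 + (t₂ - a - 1) = t₂ := by omega
        rwa [this]
    · -- case α i > T : find any occurrence in (a, b]
      have hocc : ∃ y, a + 1 ≤ y ∧ y ≤ b ∧ i ∈ C y := by
        by_contra hcon
        push_neg at hcon
        have hLba : lastOcc C i b ≤ a := by
          by_contra hc2
          exact hcon (lastOcc C i b) (by omega) hLb.2.1 hLb.2.2.1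
        have h1 : lastOcc C i b ≤ lastOcc C i a :=
          le_lastOcc hLba hLb.1 hLb.2.2.1
        have h2 : lastOcc C i a ≤ lastOcc C i b :=
          le_lastOcc (by omega) hLa.1 hLa.2.2.1
        have := heq i
        omega
      obtain ⟨y, hy1, hy2, hy3⟩ := hocc
      set r := y - a - 1 with hr
      have hrT : r < T := by omega
      rcases le_or_gt p r with hpr | hpr
      · refine ⟨r - p, by omega, ?_⟩
        rw [show p + (r - p) = r by omega, Nat.mod_eq_of_lt hrT,
          show a + 1 + r = y by omega]
        exact hy3
      · refine ⟨r + T - p, by omega, ?_⟩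
        rw [show p + (r + T - p) = r + T by omega, Nat.add_mod_right,
          Nat.mod_eq_of_lt hrT, show a + 1 + r = y by omega]
        exact hy3
  -- conclude feasibility
  intro i t ht
  have hp : (t - 1) % T < T := Nat.mod_lt _ (by omega)
  obtain ⟨d, hd, hmem⟩ := hkey i ((t - 1) % T) hp
  refine ⟨t + d, by omega, by omega, ?_⟩
  have hmm : (t + d - 1) % T = ((t - 1) % T + d) % T := by
    rw [show t + d - 1 = (t - 1) + d by omega, Nat.add_mod (t - 1) d T,
      Nat.add_mod ((t - 1) % T) d T, Nat.mod_mod_of_dvd _ dvd_rfl]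
  simpa [hmm] using hmem

/-- If a connection-pattern instance admits a feasible schedule, then it admits a
feasible cyclic schedule with period `T ≤ ∏ i, α i`. -/
theorem stmt_7 {q : ℕ} (α : Fin q → ℕ) (hα : ∀ i, 1 ≤ α i)
    (𝓒 : Finset (Finset (Fin q))) (h𝓒 : ∀ P ∈ 𝓒, P.Nonempty)
    (h : ∃ C : ℕ → Finset (Fin q), (∀ t, 1 ≤ t → C t ∈ 𝓒) ∧ ConnFeasible α C) :
    ∃ (C : ℕ → Finset (Fin q)) (T : ℕ),
      (∀ t, 1 ≤ t → C t ∈ 𝓒) ∧ ConnFeasible α C ∧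
      1 ≤ T ∧ T ≤ ∏ i : Fin q, α i ∧ ∀ t, 1 ≤ t → C (t + T) = C t := by
  classical
  obtain ⟨C, hC, hfeas⟩ := h
  set m := ∏ i : Fin q, α i with hm
  have hm1 : 1 ≤ m := Finset.one_le_prod' (fun i _ => hα i)
  have hαm : ∀ i, α i ≤ m :=
    fun i => Finset.single_le_prod' (fun j _ => hα j) (Finset.mem_univ i)
  have hLspec : ∀ (i : Fin q) t, α i ≤ t →
      1 ≤ lastOcc C i t ∧ lastOcc C i t ≤ t ∧ i ∈ C (lastOcc C i t) ∧
        t < lastOcc C i t + α i := by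
    intro i t ht
    obtain ⟨t', ht1, ht2, ht3⟩ := hfeas i (t - α i + 1) (by omega)
    have hle : t' ≤ lastOcc C i t := le_lastOcc (k := t') (by omega) (by omega) ht3
    have hP := lastOcc_mem (C := C) (k := t') (t := t) (by omega) (by omega) ht3
    exact ⟨hP.1, lastOcc_le C i t, hP.2, by omega⟩
  have hstate : ∀ (k : Fin (m + 1)) (i : Fin q),
      (m + k) - lastOcc C i (m + k) < α i := by
    intro k i
    have := hLspec i (m + k) (le_trans (hαm i) (Nat.le_add_right m k))
    omega
  have hcard : Fintype.card (∀ i : Fin q, Fin (α i)) < Fintype.card (Fin (m + 1)) := by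
    simp [Fintype.card_pi, ← hm]
  obtain ⟨k₁, k₂, hne, heqk⟩ := Fintype.exists_ne_map_eq_of_card_lt
    (fun k : Fin (m + 1) =>
      (fun i => (⟨(m + k) - lastOcc C i (m + k), hstate k i⟩ : Fin (α i)))) hcard
  have hvne : (k₁ : ℕ) ≠ (k₂ : ℕ) := fun hv => hne (Fin.ext hv)
  have key : ∀ (a b : ℕ), a < b → (∀ i, α i ≤ a) → b - a ≤ m →
      (∀ i, a - lastOcc C i a = b - lastOcc C i b) →
      ∃ (C' : ℕ → Finset (Fin q)) (T : ℕ),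
        (∀ t, 1 ≤ t → C' t ∈ 𝓒) ∧ ConnFeasible α C' ∧
        1 ≤ T ∧ T ≤ m ∧ ∀ t, 1 ≤ t → C' (t + T) = C' t := by
    intro a b hab haα hbm heq
    refine ⟨fun t => C (a + 1 + ((t - 1) % (b - a))), b - a, ?_,
      stmt_7_aux α hα C hfeas a b hab haα heq, by omega, hbm, ?_⟩
    · intro t ht
      exact hC _ (by omega)
    · intro t ht
      simp only
      congr 2
      rw [show t + (b - a) - 1 = (t - 1) + (b - a) by omega, Nat.add_mod_right]
  rcases Nat.lt_or_ge (k₁ : ℕ) (k₂ : ℕ) with hlt | hge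
  · refine key (m + k₁) (m + k₂) (by omega) (fun i => by have := hαm i; omega)
      (by have := k₂.isLt; omega) (fun i => ?_)
    have := congrFun heqk i
    exact congrArg Fin.val this
  · refine key (m + k₂) (m + k₁) (by omega) (fun i => by have := hαm i; omega)
      (by have := k₁.isLt; omega) (fun i => ?_)
    have := congrFun heqk i
    exact (congrArg Fin.val this).symm
end

section
/- Let (𝓒, {α_1,…,α_q}) be a connection-pattern instance and let a : {1,…,q} → {1,…,l} be an assignment of agents to patterns such that i ∈ C_{a(i)} for every agent i. For each pattern index j in the range of a, define α̂_j = min{ α_i : a(i) = j }. If the pinwheel instance consisting of the numbers {α̂_j : j in the range of a} admits a feasible pinwheel schedule, then the connection-pattern instance (𝓒, {α_i}) admits a feasible schedule. -/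
/-- If each agent `i` is assigned to a connection pattern `𝓒 (a i)` containing it,
and the pinwheel instance consisting, for each pattern index `j` in the range of `a`,
of `αmin j = min { α i : a i = j }`, admits a feasible pinwheel schedule, then the
connection-pattern instance `(𝓒, α)` admits a feasible schedule. -/
theorem stmt_9 {q l : ℕ} (α : Fin q → ℕ) (hα : ∀ i, 1 ≤ α i)
    (𝓒 : Fin l → Finset (Fin q)) (h𝓒 : ∀ j, (𝓒 j).Nonempty)
    (a : Fin q → Fin l) (ha : ∀ i, i ∈ 𝓒 (a i))
    (αmin : Fin l → ℕ)
    (hmin : ∀ (j : Fin l) (i : Fin q), a i = j →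
      αmin j ≤ α i ∧ ∃ i', a i' = j ∧ αmin j = α i')
    -- a feasible pinwheel schedule for the instance {αmin j : j ∈ range a}
    (hPP : ∃ c : ℕ → Fin l, (∀ t, ∃ i, a i = c t) ∧
      ∀ j : Fin l, (∃ i, a i = j) →
        ∀ t : ℕ, ∃ t', t ≤ t' ∧ t' < t + αmin j ∧ c t' = j) :
    -- a feasible connection-pattern schedule
    ∃ C : ℕ → Finset (Fin q), (∀ t, ∃ j : Fin l, C t = 𝓒 j) ∧
      ∀ i : Fin q, ∀ t : ℕ, ∃ t', t ≤ t' ∧ t' < t + α i ∧ i ∈ C t' := by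
  obtain ⟨c, hc1, hc2⟩ := hPP
  refine ⟨fun t => 𝓒 (c t), fun t => ⟨c t, rfl⟩, fun i t => ?_⟩
  obtain ⟨t', ht1, ht2, ht3⟩ := hc2 (a i) ⟨i, rfl⟩ t
  exact ⟨t', ht1, lt_of_lt_of_le ht2 (by
    have := (hmin (a i) i rfl).1; omega), by simp only [ht3]; exact ha i⟩
end

section
/- Let α_1, …, α_q be integers ≥ 1, let 1 ≤ m_c ≤ q, and let 𝓒 be the set of all subsets of {1,…,q} of cardinality m_c. Then the connection-pattern instance (𝓒, {α_i}) admits a feasible schedule if and only if the windows-scheduling instance (m_c, {α_i}) admits a feasible schedule. -/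
/-- A windows schedule `W` over `m` channels is feasible for the window sizes `α`
if every symbol `i` occurs in one of the tuples in every window of `α i`
consecutive time slots. -/
def WSPFeasible {q m : ℕ} (α : Fin q → ℕ) (W : ℕ → Fin m → Fin q) : Prop :=
  ∀ i : Fin q, ∀ t : ℕ, ∃ t' k, t ≤ t' ∧ t' < t + α i ∧ W t' k = i

/-- When the connection patterns are all subsets of `{1,…,q}` of cardinality `m_c`,
the connection-pattern instance admits a feasible schedule if and only if the
windows-scheduling instance `(m_c, {α_i})` does. -/
theorem stmt_10 {q mc : ℕ} (α : Fin q → ℕ) (hα : ∀ i, 1 ≤ α i)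
    (hmc : 1 ≤ mc) (hmcq : mc ≤ q) :
    (∃ C : ℕ → Finset (Fin q), (∀ t, (C t).card = mc) ∧
      ∀ i : Fin q, ∀ t : ℕ, ∃ t', t ≤ t' ∧ t' < t + α i ∧ i ∈ C t') ↔
    (∃ W : ℕ → Fin mc → Fin q, WSPFeasible α W) := by
  constructor
  · rintro ⟨C, hcard, hfeas⟩
    refine ⟨fun t k => (C t).orderIsoOfFin (hcard t) k, fun i t => ?_⟩
    obtain ⟨t', ht1, ht2, hmem⟩ := hfeas i t
    refine ⟨t', ((C t').orderIsoOfFin (hcard t')).symm ⟨i, hmem⟩, ht1, ht2, ?_⟩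
    simp
  · rintro ⟨W, hW⟩
    have hext : ∀ t : ℕ, ∃ s : Finset (Fin q),
        (Finset.image (W t) Finset.univ) ⊆ s ∧ s.card = mc := by
      intro t
      apply Finset.exists_superset_card_eq
      · calc (Finset.image (W t) Finset.univ).card ≤ (Finset.univ : Finset (Fin mc)).card :=
              Finset.card_image_le
          _ = mc := by simp
      · simpa using hmcq
    choose C hsub hcard using hext
    refine ⟨C, hcard, fun i t => ?_⟩
    obtain ⟨t', k, ht1, ht2, hk⟩ := hW i t
    exact ⟨t', ht1, ht2, hsub t' (Finset.mem_image.2 ⟨k, Finset.mem_univ k, hk⟩)⟩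
end

section
/- Let (m_c, {α_1,…,α_q}) be a windows-scheduling instance and define α̃_i = m_c · α_i for each i. If the pinwheel instance {α̃_1,…,α̃_q} admits a feasible pinwheel schedule, then the windows-scheduling instance (m_c, {α_i}) admits a feasible schedule. -/
/-- If the pinwheel instance `{m_c · α_i}` admits a feasible pinwheel schedule, then
the windows-scheduling instance `(m_c, {α_i})` admits a feasible schedule. -/
theorem stmt_11 {q mc : ℕ} (α : Fin q → ℕ) (hα : ∀ i, 1 ≤ α i) (hmc : 1 ≤ mc)
    (hPP : ∃ c : ℕ → Fin q,
      ∀ i : Fin q, ∀ t : ℕ, ∃ t', t ≤ t' ∧ t' < t + mc * α i ∧ c t' = i) :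
    ∃ W : ℕ → Fin mc → Fin q, WSPFeasible α W := by
  obtain ⟨c, hc⟩ := hPP
  have hmc0 : 0 < mc := hmc
  refine ⟨fun t k => c (mc * t + k), ?_⟩
  intro i t
  obtain ⟨t', h1, h2, h3⟩ := hc i (mc * t)
  refine ⟨t' / mc, ⟨t' % mc, Nat.mod_lt _ hmc0⟩, ?_, ?_, ?_⟩
  · exact Nat.le_div_iff_mul_le hmc0 |>.2 (by rwa [Nat.mul_comm])
  · have : t' < mc * (t + α i) := by rw [Nat.mul_add]; exact h2
    exact Nat.div_lt_iff_lt_mul hmc0 |>.2 (by rwa [Nat.mul_comm] at this)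
  · show c (mc * (t' / mc) + t' % mc) = i
    rw [Nat.div_add_mod]; exact h3
end

section
/- Let α_1 ≤ α_2 ≤ … ≤ α_q be integers ≥ 1, let m_c ≥ 1, and define ζ_i = m_c·α_i for i ≤ m_c and ζ_i = m_c·α_i + (m_c − 1) for i > m_c. If the windows-scheduling instance (m_c, {α_i}) admits a feasible schedule, then the pinwheel instance {ζ_1,…,ζ_q} admits a feasible pinwheel schedule. Equivalently, if {ζ_i} admits no feasible pinwheel schedule, then (m_c, {α_i}) admits no feasible windows schedule. -/
open Function

theorem Equiv.Perm.exists_apply_eq_of_mem_range {α β : Type*} [Finite α] (g home : α → β)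
    (hhome : Injective home) :
    ∃ σ : Equiv.Perm α, ∀ a, home a ∈ Set.range g → g (σ a) = home a := by
  classical
  let s : Set α := {a | home a ∈ Set.range g}
  choose p hp using fun a : s => a.2
  have hp_inj : Injective p := fun a b h => Subtype.ext (hhome (by rw [← hp a, ← hp b, h]))
  let e : s ≃ Set.range p := Equiv.ofInjective p hp_inj
  refine ⟨e.extendSubtype, fun a ha => ?_⟩
  rw [e.extendSubtype_apply_of_mem a ha]
  exact hp ⟨a, ha⟩

theorem exists_mul_add_mem_Ico {m r : ℕ} (hr : r < m) (t : ℕ) :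
    ∃ s, t ≤ m * s + r ∧ m * s + r < t + m := by
  refine ⟨(t + m - 1 - r) / m, ?_⟩
  have hdiv := Nat.div_add_mod (t + m - 1 - r) m
  have hmod := Nat.mod_lt (t + m - 1 - r) (show 0 < m by omega)
  omega

theorem WSPFeasible.comp_perm {m q : ℕ} {α : Fin q → ℕ} {W : ℕ → Fin m → Fin q}
    (hW : WSPFeasible α W) (σ : ℕ → Equiv.Perm (Fin m)) :
    WSPFeasible α fun t => W t ∘ σ t := by
  intro i t
  obtain ⟨t', k, h1, h2, hk⟩ := hW i t
  exact ⟨t', (σ t').symm k, h1, h2, by simp [hk]⟩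

def interleave {m q : ℕ} [NeZero m] (W : ℕ → Fin m → Fin q) (n : ℕ) : Fin q :=
  W (n / m) (Fin.ofNat m n)

section Interleave

variable {m q : ℕ} [NeZero m] {α : Fin q → ℕ} {W : ℕ → Fin m → Fin q}

theorem interleave_mul_add (W : ℕ → Fin m → Fin q) (t : ℕ) (k : Fin m) :
    interleave W (m * t + k) = W t k := by
  have hdiv : (m * t + k) / m = t := by
    rw [Nat.mul_add_div (Nat.pos_of_neZero m), Nat.div_eq_of_lt k.isLt, add_zero]
  have hmod : Fin.ofNat m (m * t + k) = k := by
    ext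
    simp [Nat.mod_eq_of_lt k.isLt]
  rw [interleave, hdiv, hmod]

theorem WSPFeasible.exists_interleave_eq (hW : WSPFeasible α W) (i : Fin q) (t : ℕ) :
    ∃ n, t ≤ n ∧ n < t + (m * α i + (m - 1)) ∧ interleave W n = i := by
  obtain ⟨s, hs_ge, hs_lt⟩ := exists_mul_add_mem_Ico (r := 0) (Nat.pos_of_neZero m) t
  obtain ⟨t', k, h_ge, h_lt, hk⟩ := hW i s
  refine ⟨m * t' + k, ?_, ?_, by rw [interleave_mul_add, hk]⟩
  · have := Nat.mul_le_mul_left m h_ge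
    omega
  · have := Nat.mul_le_mul_left m (Nat.succ_le_of_lt h_lt)
    rw [Nat.mul_succ, Nat.mul_add] at this
    have := k.isLt
    omega

theorem WSPFeasible.exists_interleave_eq_of_home (hW : WSPFeasible α W) (i : Fin q)
    (hi : (i : ℕ) < m) (hhome : ∀ t, (∃ k, W t k = i) → W t ⟨i, hi⟩ = i) (t : ℕ) :
    ∃ n, t ≤ n ∧ n < t + m * α i ∧ interleave W n = i := by
  obtain ⟨s, hs_ge, hs_lt⟩ := exists_mul_add_mem_Ico hi t
  obtain ⟨t', k, h_ge, h_lt, hk⟩ := hW i s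
  refine ⟨m * t' + i, ?_, ?_, ?_⟩
  · have := Nat.mul_le_mul_left m h_ge
    omega
  · have := Nat.mul_le_mul_left m (Nat.succ_le_of_lt h_lt)
    rw [Nat.mul_succ, Nat.mul_add] at this
    omega
  · exact (interleave_mul_add W t' ⟨i, hi⟩).trans (hhome t' ⟨k, hk⟩)

end Interleave

theorem stmt_12_general {q mc : ℕ} (α : Fin q → ℕ) (hmc : 1 ≤ mc)
    (ζ : Fin q → ℕ)
    (hζ : ∀ i : Fin q,
      ζ i = if (i : ℕ) < mc then mc * α i else mc * α i + (mc - 1))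
    (hW : ∃ W : ℕ → Fin mc → Fin q, WSPFeasible α W) :
    ∃ c : ℕ → Fin q, ∀ i : Fin q, ∀ t : ℕ, ∃ t', t ≤ t' ∧ t' < t + ζ i ∧ c t' = i := by
  obtain ⟨W, hW⟩ := hW
  have : NeZero mc := ⟨by omega⟩
  choose σ hσ using fun t => Equiv.Perm.exists_apply_eq_of_mem_range
    (fun k => (W t k : ℕ)) Fin.val Fin.val_injective
  refine ⟨interleave fun t => W t ∘ σ t, fun i t => ?_⟩
  rw [hζ]
  split_ifs with hi
  · refine (hW.comp_perm σ).exists_interleave_eq_of_home i hi (fun t' hk => ?_) t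
    obtain ⟨k, hk⟩ := hk
    exact Fin.ext (hσ t' ⟨i, hi⟩ ⟨σ t' k, by simp [← hk]⟩)
  · exact (hW.comp_perm σ).exists_interleave_eq i t

/-- With `α_1 ≤ … ≤ α_q` and `ζ_i = m_c·α_i` for the first `m_c` symbols,
`ζ_i = m_c·α_i + (m_c − 1)` for the remaining ones: if the windows-scheduling
instance `(m_c, {α_i})` admits a feasible schedule, then the pinwheel instance
`{ζ_i}` admits a feasible pinwheel schedule. -/
theorem stmt_12 {q mc : ℕ} (α : Fin q → ℕ) (hα : ∀ i, 1 ≤ α i) (hmc : 1 ≤ mc)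
    (hmono : Monotone α)
    (ζ : Fin q → ℕ)
    (hζ : ∀ i : Fin q,
      ζ i = if (i : ℕ) < mc then mc * α i else mc * α i + (mc - 1))
    (hW : ∃ W : ℕ → Fin mc → Fin q, WSPFeasible α W) :
    ∃ c : ℕ → Fin q, ∀ i : Fin q, ∀ t : ℕ, ∃ t', t ≤ t' ∧ t' < t + ζ i ∧ c t' = i :=
  stmt_12_general α hmc ζ hζ hW
end

section
/- Let (m_c, {α_1,…,α_q}) be a windows-scheduling instance and define α̃_i = m_c · α_i. If the instance admits a feasible perfect schedule (i.e., a feasible schedule in which no symbol appears in two different channel positions), then the pinwheel instance {α̃_1,…,α̃_q} admits a feasible pinwheel schedule. Equivalently, if {α̃_i} admits no feasible pinwheel schedule, then (m_c, {α_i}) admits no perfect windows schedule. -/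
/-- A windows schedule is perfect if no symbol migrates between channels. -/
def WSPPerfect {q m : ℕ} (W : ℕ → Fin m → Fin q) : Prop :=
  ∀ (j k : Fin m) (t₁ t₂ : ℕ), W t₁ j = W t₂ k → j = k

/-- If the windows-scheduling instance `(m_c, {α_i})` admits a feasible perfect
schedule, then the pinwheel instance `{m_c · α_i}` admits a feasible pinwheel
schedule. -/
theorem stmt_13 {q mc : ℕ} (α : Fin q → ℕ) (hα : ∀ i, 1 ≤ α i) (hmc : 1 ≤ mc)
    (hW : ∃ W : ℕ → Fin mc → Fin q, WSPFeasible α W ∧ WSPPerfect W) :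
    ∃ c : ℕ → Fin q,
      ∀ i : Fin q, ∀ t : ℕ, ∃ t', t ≤ t' ∧ t' < t + mc * α i ∧ c t' = i := by
  obtain ⟨W, hfeas, hperf⟩ := hW
  have hmc0 : 0 < mc := hmc
  refine ⟨fun T => W (T / mc) ⟨T % mc, Nat.mod_lt _ hmc0⟩, fun i t => ?_⟩
  -- the fixed channel of symbol i
  obtain ⟨t₀, k₀, -, -, hk₀⟩ := hfeas i 0
  have hk₀lt : (k₀ : ℕ) < mc := k₀.isLt
  have hαi : 1 ≤ α i := hα i
  -- choose the window start s
  obtain ⟨a, ha⟩ : ∃ a, a = t + mc - 1 - (k₀ : ℕ) := ⟨_, rfl⟩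
  obtain ⟨s, hs⟩ : ∃ s, s = a / mc := ⟨_, rfl⟩
  have hdm : mc * s + a % mc = a := by rw [hs]; exact Nat.div_add_mod a mc
  have hmlt : a % mc < mc := Nat.mod_lt _ hmc0
  have hlow : t ≤ mc * s + (k₀ : ℕ) := by omega
  have hhigh : mc * s + (k₀ : ℕ) + 1 ≤ t + mc := by omega
  obtain ⟨t', k, hst', ht'lt, hWt'⟩ := hfeas i s
  have hkk₀ : k = k₀ := hperf k k₀ t' t₀ (by rw [hWt', hk₀])
  subst hkk₀
  refine ⟨mc * t' + (k : ℕ), ?_, ?_, ?_⟩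
  · have : mc * s ≤ mc * t' := Nat.mul_le_mul_left mc hst'
    omega
  · have h1 : t' + 1 ≤ s + α i := ht'lt
    have h2 : mc * (t' + 1) ≤ mc * (s + α i) := Nat.mul_le_mul_left mc h1
    have h3 : mc * (t' + 1) = mc * t' + mc := by ring
    have h4 : mc * (s + α i) = mc * s + mc * α i := by ring
    omega
  · have hdiv : (mc * t' + (k : ℕ)) / mc = t' := by
      rw [Nat.mul_add_div hmc0, Nat.div_eq_of_lt k.isLt]; omega
    have hmod : (mc * t' + (k : ℕ)) % mc = (k : ℕ) := by
      rw [Nat.mul_add_mod, Nat.mod_eq_of_lt k.isLt]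
    simp only [hdiv]
    convert hWt' using 2
    exact Fin.ext hmod
end

section
/- If a windows-scheduling instance (m_c, {α_1,…,α_q}) has density ρ = Σ_{i=1}^q 1/α_i ≤ m_c/2, then it admits a feasible schedule. -/
lemma WSPFeasible.mono {q m : ℕ} {α β : Fin q → ℕ} {W : ℕ → Fin m → Fin q}
    (hW : WSPFeasible α W) (hαβ : ∀ i, α i ≤ β i) : WSPFeasible β W := by
  intro i t
  obtain ⟨t', c, ht, ht', hc⟩ := hW i t
  exact ⟨t', c, ht, ht'.trans_le (Nat.add_le_add_left (hαβ i) t), hc⟩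

lemma WSPFeasible.perm {q m : ℕ} {α : Fin q → ℕ} {W : ℕ → Fin m → Fin q}
    (σ : Equiv.Perm (Fin q)) (hW : WSPFeasible (α ∘ σ) W) :
    WSPFeasible α (fun t c => σ (W t c)) := by
  intro i t
  obtain ⟨t', c, ht, ht', hc⟩ := hW (σ.symm i) t
  exact ⟨t', c, ht, by simpa using ht', by simp [hc]⟩

namespace WindowsScheduling

-- `bitRev e n` reverses the lowest `e` bits of `n`: bit `e - 1` of `n` becomes bit `0`.
def bitRev : ℕ → ℕ → ℕ
  | 0, _ => 0
  | e + 1, n => 2 * bitRev e n + n / 2 ^ e % 2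

lemma bitRev_lt (e n : ℕ) : bitRev e n < 2 ^ e := by
  induction e with
  | zero => simp [bitRev]
  | succ e ih => rw [bitRev, pow_succ]; omega

lemma bitRev_add_div_pow (e d n : ℕ) : bitRev (e + d) n / 2 ^ d = bitRev e n := by
  induction d with
  | zero => simp
  | succ d ih =>
    have halve : (2 * bitRev (e + d) n + n / 2 ^ (e + d) % 2) / 2 = bitRev (e + d) n := by omega
    rw [← add_assoc, bitRev, pow_succ', ← Nat.div_div_eq_div_mul, halve, ih]

lemma bitRev_mod_pow (e n : ℕ) : bitRev e (n % 2 ^ e) = bitRev e n := by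
  induction e generalizing n with
  | zero => simp [bitRev]
  | succ e ih =>
    have hlow : bitRev e (n % 2 ^ (e + 1)) = bitRev e n := by
      rw [← ih, Nat.mod_mod_of_dvd _ (pow_dvd_pow 2 e.le_succ), ih]
    rw [bitRev, bitRev, hlow, Nat.mod_pow_succ]
    congr 1
    rw [Nat.add_mul_div_left _ _ (by positivity), Nat.div_eq_of_lt (Nat.mod_lt _ (by positivity)),
      zero_add, Nat.mod_mod]

lemma exists_bitRev_eq {e r : ℕ} (hr : r < 2 ^ e) : ∃ n, bitRev e n = r := by
  induction e generalizing r with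
  | zero => exact ⟨0, by simp [bitRev]; omega⟩
  | succ e ih =>
    obtain ⟨n, hn⟩ := ih (r := r / 2) (by rw [pow_succ] at hr; omega)
    refine ⟨n % 2 ^ e + 2 ^ e * (r % 2), ?_⟩
    have hlow : bitRev e (n % 2 ^ e + 2 ^ e * (r % 2)) = r / 2 := by
      rw [← bitRev_mod_pow, Nat.add_mul_mod_self_left, Nat.mod_mod, bitRev_mod_pow, hn]
    rw [bitRev, hlow, Nat.add_mul_div_left _ _ (by positivity),
      Nat.div_eq_of_lt (Nat.mod_lt _ (by positivity))]
    omega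

lemma exists_mod_eq_of_le_lt {p : ℕ} (hp : 0 < p) (t r : ℕ) :
    ∃ t', t ≤ t' ∧ t' < t + p ∧ t' % p = r % p := by
  have hlt := Nat.mod_lt (r + p - t % p) hp
  refine ⟨t + (r + p - t % p) % p, by omega, by omega, ?_⟩
  have hsum : t + (r + p - t % p) = r + p + p * (t / p) := by
    have := Nat.mod_add_div t p; have := Nat.mod_lt t hp; omega
  rw [Nat.add_mod_mod, hsum, Nat.add_mul_mod_self_left, Nat.add_mod_right]

lemma exists_bitRev_eq_of_le_lt {e r : ℕ} (hr : r < 2 ^ e) (t : ℕ) :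
    ∃ t', t ≤ t' ∧ t' < t + 2 ^ e ∧ bitRev e t' = r := by
  obtain ⟨n, rfl⟩ := exists_bitRev_eq hr
  obtain ⟨t', ht, ht', hmod⟩ := exists_mod_eq_of_le_lt (by positivity : 0 < 2 ^ e) t n
  exact ⟨t', ht, ht', by rw [← bitRev_mod_pow, hmod, bitRev_mod_pow]⟩

section DyadicPacking

variable {q : ℕ} (E : ℕ) (b : Fin q → ℕ)

def blockStart (k : Fin q) : ℕ := ∑ j ∈ Finset.Iio k, 2 ^ (E - b j)

def block (k : Fin q) : Set ℕ := Set.Ico (blockStart E b k) (blockStart E b k + 2 ^ (E - b k))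

lemma blockStart_add_eq_sum_Iic (k : Fin q) :
    blockStart E b k + 2 ^ (E - b k) = ∑ j ∈ Finset.Iic k, 2 ^ (E - b j) := by
  rw [blockStart, ← Finset.Iio_insert, Finset.sum_insert (by simp), add_comm]

lemma blockStart_add_le_blockStart {j k : Fin q} (h : j < k) :
    blockStart E b j + 2 ^ (E - b j) ≤ blockStart E b k := by
  rw [blockStart_add_eq_sum_Iic, blockStart]
  exact Finset.sum_le_sum_of_subset fun x hx =>
    Finset.mem_Iio.mpr ((Finset.mem_Iic.mp hx).trans_lt h)

lemma blockStart_add_le_sum (k : Fin q) :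
    blockStart E b k + 2 ^ (E - b k) ≤ ∑ j, 2 ^ (E - b j) := by
  rw [blockStart_add_eq_sum_Iic]
  exact Finset.sum_le_sum_of_subset (Finset.subset_univ _)

lemma pow_dvd_blockStart (hb : Monotone b) (k : Fin q) : 2 ^ (E - b k) ∣ blockStart E b k :=
  Finset.dvd_sum fun _ hj =>
    pow_dvd_pow 2 (Nat.sub_le_sub_left (hb (Finset.mem_Iio.mp hj).le) E)

lemma eq_of_mem_block {j k : Fin q} {p : ℕ} (hj : p ∈ block E b j) (hk : p ∈ block E b k) :
    j = k := by
  rcases lt_trichotomy j k with h | h | h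
  · exact absurd (hj.2.trans_le (blockStart_add_le_blockStart E b h)) (not_lt.mpr hk.1)
  · exact h
  · exact absurd (hk.2.trans_le (blockStart_add_le_blockStart E b h)) (not_lt.mpr hj.1)

open Classical in
noncomputable def dyadicSchedule [Nonempty (Fin q)] (m t : ℕ) (c : Fin m) : Fin q :=
  if h : ∃ k, c * 2 ^ E + bitRev E t ∈ block E b k then h.choose else Classical.arbitrary _

lemma dyadicSchedule_eq [Nonempty (Fin q)] {m t : ℕ} {c : Fin m} {k : Fin q}
    (hk : c * 2 ^ E + bitRev E t ∈ block E b k) : dyadicSchedule E b m t c = k := by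
  have h : ∃ k, c * 2 ^ E + bitRev E t ∈ block E b k := ⟨k, hk⟩
  rw [dyadicSchedule, dif_pos h]
  exact eq_of_mem_block E b h.choose_spec hk

lemma exists_mem_block {m : ℕ} (hb : Monotone b) {k : Fin q} (hE : b k ≤ E)
    (hsum : ∑ j, 2 ^ (E - b j) ≤ m * 2 ^ E) (t : ℕ) :
    ∃ t', t ≤ t' ∧ t' < t + 2 ^ b k ∧
      ∃ c : Fin m, c * 2 ^ E + bitRev E t' ∈ block E b k := by
  obtain ⟨a, ha⟩ := pow_dvd_blockStart E b hb k
  set s := 2 ^ (E - b k)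
  have hs : 0 < s := by positivity
  have hE' : 2 ^ E = s * 2 ^ b k := by rw [← pow_add]; congr 1; omega
  have hc : a / 2 ^ b k < m := by
    have hlt : s * a < s * (m * 2 ^ b k) := by
      have := blockStart_add_le_sum E b k
      rw [ha] at this
      rw [mul_left_comm, ← hE']
      omega
    rw [Nat.div_lt_iff_lt_mul (by positivity)]
    exact Nat.lt_of_mul_lt_mul_left hlt
  obtain ⟨t', ht, ht', hrev⟩ :=
    exists_bitRev_eq_of_le_lt (Nat.mod_lt a (by positivity : 0 < 2 ^ b k)) t
  refine ⟨t', ht, ht', ⟨a / 2 ^ b k, hc⟩, ?_⟩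
  have hdiv : (a / 2 ^ b k * 2 ^ E + bitRev E t') / s = a := by
    rw [hE', mul_left_comm, add_comm, Nat.add_mul_div_left _ _ hs,
      show E = b k + (E - b k) by omega, bitRev_add_div_pow, hrev, add_comm, Nat.div_add_mod']
  set p := a / 2 ^ b k * 2 ^ E + bitRev E t'
  change p ∈ Set.Ico (blockStart E b k) (blockStart E b k + s)
  rw [ha, ← hdiv, mul_comm s]
  exact ⟨Nat.div_mul_le_self _ _, Nat.lt_div_mul_add hs⟩

theorem wspFeasible_dyadicSchedule [Nonempty (Fin q)] {m : ℕ} (hb : Monotone b)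
    (hE : ∀ k, b k ≤ E) (hsum : ∑ k, 2 ^ (E - b k) ≤ m * 2 ^ E) :
    WSPFeasible (fun k => 2 ^ b k) (dyadicSchedule E b m) := by
  intro k t
  obtain ⟨t', ht, ht', c, hc⟩ := exists_mem_block E b hb (hE k) hsum t
  exact ⟨t', c, ht, ht', dyadicSchedule_eq E b hc⟩

end DyadicPacking

theorem exists_wspFeasible_pow_two {q m : ℕ} [Nonempty (Fin q)] (b : Fin q → ℕ)
    (hb : ∑ k, (2 : ℝ)⁻¹ ^ b k ≤ m) :
    ∃ W : ℕ → Fin m → Fin q, WSPFeasible (fun k => 2 ^ b k) W := by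
  set σ := Tuple.sort b
  set E := Finset.univ.sup (b ∘ σ)
  have hE : ∀ k, (b ∘ σ) k ≤ E := fun k => Finset.le_sup (Finset.mem_univ k)
  have hsum : ∑ k, 2 ^ (E - (b ∘ σ) k) ≤ m * 2 ^ E := by
    have hreal : ∑ k, (2 : ℝ) ^ (E - (b ∘ σ) k) ≤ m * 2 ^ E :=
      calc ∑ k, (2 : ℝ) ^ (E - (b ∘ σ) k) = 2 ^ E * ∑ k, (2 : ℝ)⁻¹ ^ b (σ k) := by
            rw [Finset.mul_sum]
            exact Finset.sum_congr rfl fun k _ => by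
              rw [pow_sub₀ _ two_ne_zero (hE k), inv_pow, Function.comp_apply]
        _ = 2 ^ E * ∑ k, (2 : ℝ)⁻¹ ^ b k := by
            rw [Equiv.sum_comp σ (fun k => (2 : ℝ)⁻¹ ^ b k)]
        _ ≤ m * 2 ^ E := by rw [mul_comm]; gcongr
    exact_mod_cast hreal
  exact ⟨_, (wspFeasible_dyadicSchedule E (b ∘ σ) (Tuple.monotone_sort b) hE hsum).perm
    (α := fun k => 2 ^ b k) σ⟩

lemma inv_two_pow_log_le {n : ℕ} (hn : n ≠ 0) :
    (2 : ℝ)⁻¹ ^ Nat.log 2 n ≤ 2 * (1 / n) := by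
  have hlt : (n : ℝ) < 2 * 2 ^ Nat.log 2 n := by
    exact_mod_cast (pow_succ' 2 _) ▸ Nat.lt_pow_succ_log_self one_lt_two n
  have hn' : (0 : ℝ) < n := by positivity
  rw [inv_pow, mul_one_div, inv_eq_one_div, div_le_div_iff₀ (by positivity) hn']
  linarith

end WindowsScheduling

theorem stmt_15_general {q mc : ℕ} (hq : 0 < q) (α : Fin q → ℕ) (hα : ∀ i, 1 ≤ α i)
    (hρ : ∑ i : Fin q, (1 : ℝ) / (α i : ℝ) ≤ (mc : ℝ) / 2) :
    ∃ W : ℕ → Fin mc → Fin q, WSPFeasible α W := by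
  have : Nonempty (Fin q) := ⟨⟨0, hq⟩⟩
  have hα0 (i : Fin q) : α i ≠ 0 := Nat.one_le_iff_ne_zero.mp (hα i)
  have hdensity : ∑ i, (2 : ℝ)⁻¹ ^ Nat.log 2 (α i) ≤ mc :=
    calc ∑ i, (2 : ℝ)⁻¹ ^ Nat.log 2 (α i) ≤ ∑ i, 2 * (1 / (α i : ℝ)) :=
          Finset.sum_le_sum fun i _ => WindowsScheduling.inv_two_pow_log_le (hα0 i)
      _ ≤ mc := by rw [← Finset.mul_sum]; linarith
  obtain ⟨W, hW⟩ :=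
    WindowsScheduling.exists_wspFeasible_pow_two (fun i => Nat.log 2 (α i)) hdensity
  exact ⟨W, hW.mono fun i => Nat.pow_log_le_self 2 (hα0 i)⟩

/-- If a windows-scheduling instance has density `ρ ≤ m_c / 2`, it admits a
feasible schedule. -/
theorem stmt_15 {q mc : ℕ} (hq : 0 < q) (α : Fin q → ℕ) (hα : ∀ i, 1 ≤ α i)
    (hmc : 1 ≤ mc)
    (hρ : ∑ i : Fin q, (1 : ℝ) / (α i : ℝ) ≤ (mc : ℝ) / 2) :
    ∃ W : ℕ → Fin mc → Fin q, WSPFeasible α W :=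
  stmt_15_general hq α hα hρ
end
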